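/- For every h ∈ (0,1] and every Schwartz function u : ℝ² → ℂ satisfying Pu = 0, one has ‖Au‖_{L²(ℝ²)} ≤ ((h/4)‖Δφ‖_{L^∞(ℝ²)} + 1)^{1/2} ‖u‖_{L²(ℝ²)} and ‖Bu‖_{L²(ℝ²)} ≤ ((h/4)‖Δφ‖_{L^∞(ℝ²)} + 1)^{1/2} ‖u‖_{L²(ℝ²)}. -/

import Mathlib

noncomputable section

open MeasureTheory Complex

abbrev R2 : Type := EuclideanSpace ℝ (Fin 2)

/-- Partial derivative of a complex-valued function in coordinate direction `j`. -/
def pdC (j : Fin 2) (f : R2 → ℂ) (x : R2) : ℂ :=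
  fderiv ℝ f x (EuclideanSpace.single j 1)

/-- The operator `D_j = -i ∂_j` acting on complex-valued functions. -/
def Dop (j : Fin 2) (f : R2 → ℂ) (x : R2) : ℂ := -Complex.I * pdC j f x

/-- Partial derivative of a real-valued function in coordinate direction `j`. -/
def pdR (j : Fin 2) (f : R2 → ℝ) (x : R2) : ℝ :=
  fderiv ℝ f x (EuclideanSpace.single j 1)

/-- The Laplacian of a real-valued function. -/
def lapR (f : R2 → ℝ) (x : R2) : ℝ := pdR 0 (pdR 0 f) x + pdR 1 (pdR 1 f) x

/-- The rescaled potential `φ_h(x) = φ(h^{-1/2} x)`. -/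
def phih (φ : R2 → ℝ) (h : ℝ) (x : R2) : ℝ := φ ((h ^ (-(1/2 : ℝ)) : ℝ) • x)

/-- `A u = (h/2) D₁ u - (h/2) (∂₂ φ_h) u`. -/
def opAh (φ : R2 → ℝ) (h : ℝ) (u : R2 → ℂ) (x : R2) : ℂ :=
  ((h / 2 : ℝ) : ℂ) * Dop 0 u x - ((h / 2 * pdR 1 (phih φ h) x : ℝ) : ℂ) * u x

/-- `B u = (h/2) D₂ u + (h/2) (∂₁ φ_h) u`. -/
def opBh (φ : R2 → ℝ) (h : ℝ) (u : R2 → ℂ) (x : R2) : ℂ :=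
  ((h / 2 : ℝ) : ℂ) * Dop 1 u x + ((h / 2 * pdR 0 (phih φ h) x : ℝ) : ℂ) * u x

/-- `P u = A² u + B² u - (h²/4)(Δ φ_h) u - u`. -/
def opPh (φ : R2 → ℝ) (h : ℝ) (u : R2 → ℂ) (x : R2) : ℂ :=
  opAh φ h (opAh φ h u) x + opBh φ h (opBh φ h u) x
    - ((h ^ 2 / 4 * lapR (phih φ h) x : ℝ) : ℂ) * u x - u x

/-- Composition of a temperate-growth function with a CLM on the left. -/
lemma htg_clm_comp {E F G : Type*} [NormedAddCommGroup E] [NormedSpace ℝ E]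
    [NormedAddCommGroup F] [NormedSpace ℝ F] [NormedAddCommGroup G] [NormedSpace ℝ G]
    {f : E → F} (hf : f.HasTemperateGrowth) (L : F →L[ℝ] G) :
    Function.HasTemperateGrowth (fun x => L (f x)) := by
  refine ⟨L.contDiff.comp hf.1, fun n => ?_⟩
  obtain ⟨k, C, hC⟩ := hf.2 n
  refine ⟨k, ‖L‖ * C, fun x => ?_⟩
  have h1 : iteratedFDeriv ℝ n (fun x => L (f x)) x
      = L.compContinuousMultilinearMap (iteratedFDeriv ℝ n f x) :=
    L.iteratedFDeriv_comp_left (hf.1.contDiffAt (x := x)) (mod_cast le_top)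
  rw [h1, mul_assoc]
  exact (L.norm_compContinuousMultilinearMap_le _).trans
    (by have := hC x; nlinarith [norm_nonneg L, norm_nonneg (iteratedFDeriv ℝ n f x),
      (L.norm_compContinuousMultilinearMap_le (iteratedFDeriv ℝ n f x))])

/-- A smooth function with all derivatives of order `≥ 2` bounded has a temperate-growth
derivative. -/
lemma htg_fderiv_of_bd {f : R2 → ℝ} (hf : ContDiff ℝ (⊤ : ℕ∞) f)
    (hbd : ∀ n : ℕ, 2 ≤ n → ∃ C : ℝ, ∀ x : R2, ‖iteratedFDeriv ℝ n f x‖ ≤ C) :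
    Function.HasTemperateGrowth (fderiv ℝ f) := by
  constructor
  · exact hf.fderiv_right (by simp)
  · intro n
    match n with
    | 0 =>
      -- linear growth via the mean value inequality
      obtain ⟨C, hC⟩ := hbd 2 le_rfl
      have hC0 : 0 ≤ C := (norm_nonneg _).trans (hC 0)
      refine ⟨1, ‖fderiv ℝ f 0‖ + C, fun x => ?_⟩
      have hdf : ∀ y : R2, DifferentiableAt ℝ (fderiv ℝ f) y := fun y =>
        ((hf.fderiv_right (m := 1) (WithTop.coe_le_coe.mpr le_top)).differentiable one_ne_zero) y
      have hb : ∀ y : R2, ‖fderiv ℝ (fderiv ℝ f) y‖ ≤ C := by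
        intro y
        have e1 : ‖fderiv ℝ (fderiv ℝ f) y‖ = ‖iteratedFDeriv ℝ 1 (fderiv ℝ f) y‖ := by
          rw [show ((1:ℕ)) = 0 + 1 from rfl, ← norm_iteratedFDeriv_fderiv,
            norm_iteratedFDeriv_zero]
        have e2 : ‖iteratedFDeriv ℝ 1 (fderiv ℝ f) y‖ = ‖iteratedFDeriv ℝ 2 f y‖ :=
          norm_iteratedFDeriv_fderiv
        rw [e1, e2]; exact hC y
      have mv : ‖fderiv ℝ f x - fderiv ℝ f 0‖ ≤ C * ‖x - 0‖ :=
        (convex_univ).norm_image_sub_le_of_norm_fderiv_le (fun y _ => hdf y) (fun y _ => hb y)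
          (Set.mem_univ _) (Set.mem_univ _)
      have h0 : ‖iteratedFDeriv ℝ 0 (fderiv ℝ f) x‖ = ‖fderiv ℝ f x‖ :=
        norm_iteratedFDeriv_zero
      rw [h0]
      have : ‖fderiv ℝ f x‖ ≤ ‖fderiv ℝ f 0‖ + C * ‖x‖ := by
        have := norm_sub_norm_le (fderiv ℝ f x) (fderiv ℝ f 0)
        simp only [sub_zero] at mv
        linarith
      have h1 : (1 + ‖x‖) ^ 1 = 1 + ‖x‖ := pow_one _
      rw [h1]
      nlinarith [norm_nonneg x, norm_nonneg (fderiv ℝ f 0)]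
    | (m + 1) =>
      obtain ⟨C, hC⟩ := hbd (m + 2) (by omega)
      refine ⟨0, C, fun x => ?_⟩
      have e2 : ‖iteratedFDeriv ℝ (m+1) (fderiv ℝ f) x‖ = ‖iteratedFDeriv ℝ (m+2) f x‖ :=
        norm_iteratedFDeriv_fderiv
      simpa [e2] using hC x

lemma intgr (f g : SchwartzMap R2 ℂ) :
    Integrable (fun x => f x * (starRingEnd ℂ) (g x)) volume := by
  have hint : Integrable (fun x => (starRingEnd ℂ) (g x)) volume := by
    refine (g.integrable (μ := volume)).mono ?_ ?_
    · exact (Complex.continuous_conj.comp g.continuous).aestronglyMeasurable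
    · filter_upwards with x
      simp
  exact hint.bdd_mul f.continuous.aestronglyMeasurable
    (c := SchwartzMap.seminorm ℝ 0 0 f) (Filter.Eventually.of_forall fun x => f.norm_le_seminorm ℝ x)

lemma ibp (v w : SchwartzMap R2 ℂ) (m : R2) :
    ∫ x, fderiv ℝ (⇑v) x m * (starRingEnd ℂ) (w x) =
      - ∫ x, v x * (starRingEnd ℂ) (fderiv ℝ (⇑w) x m) := by
  have hconj : ∀ x : R2, fderiv ℝ (fun y => (starRingEnd ℂ) (w y)) x m
      = (starRingEnd ℂ) (fderiv ℝ (⇑w) x m) := by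
    intro x
    have hw : HasFDerivAt (⇑w) (fderiv ℝ (⇑w) x) x := w.differentiableAt.hasFDerivAt
    have hL : HasFDerivAt (fun y => (starRingEnd ℂ) (w y))
        ((Complex.conjCLE.toContinuousLinearMap).comp (fderiv ℝ (⇑w) x)) x :=
      (Complex.conjCLE.toContinuousLinearMap.hasFDerivAt).comp x hw
    rw [hL.fderiv]
    rfl
  have hgdiff : Differentiable ℝ (fun y => (starRingEnd ℂ) (w y)) :=
    fun x => (Complex.conjCLE.toContinuousLinearMap.differentiableAt).comp x w.differentiableAt
  have h1 : Integrable (fun x => fderiv ℝ (⇑v) x m * (starRingEnd ℂ) (w x)) volume :=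
    intgr (LineDeriv.lineDerivOpCLM ℝ (SchwartzMap R2 ℂ) m v) w
  have h2 : Integrable (fun x => v x * fderiv ℝ (fun y => (starRingEnd ℂ) (w y)) x m) volume := by
    refine (intgr v (LineDeriv.lineDerivOpCLM ℝ (SchwartzMap R2 ℂ) m w)).congr ?_
    filter_upwards with x
    rw [hconj x]
    rfl
  have h3 : Integrable (fun x => v x * (starRingEnd ℂ) (w x)) volume := intgr v w
  have key := integral_mul_fderiv_eq_neg_fderiv_mul_of_integrable
    (f := ⇑v) (g := fun y => (starRingEnd ℂ) (w y)) (v := m) (μ := volume)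
    h1 h2 h3 (fun x _ => v.differentiableAt) (fun x _ => hgdiff x)
  -- key : ∫ v x * fderiv g x m = - ∫ fderiv v x m * conj (w x)
  have key' : ∫ x, v x * (starRingEnd ℂ) (fderiv ℝ (⇑w) x m)
      = - ∫ x, fderiv ℝ (⇑v) x m * (starRingEnd ℂ) (w x) := by
    rw [← key]
    exact integral_congr_ae (Filter.Eventually.of_forall fun x => by simp only [hconj x])
  rw [key']
  ring

lemma selfadj_aux (c : ℂ) (hc : (starRingEnd ℂ) c = -c) (m : R2) {g : R2 → ℂ}
    (hg : g.HasTemperateGrowth) (hgr : ∀ x, (starRingEnd ℂ) (g x) = g x)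
    (v w : SchwartzMap R2 ℂ) :
    ∫ x, (c • LineDeriv.lineDerivOpCLM ℝ (SchwartzMap R2 ℂ) m v
        + SchwartzMap.bilinLeftCLM (ContinuousLinearMap.mul ℝ ℂ) hg v) x * (starRingEnd ℂ) (w x)
    = ∫ x, v x * (starRingEnd ℂ) ((c • LineDeriv.lineDerivOpCLM ℝ (SchwartzMap R2 ℂ) m w
        + SchwartzMap.bilinLeftCLM (ContinuousLinearMap.mul ℝ ℂ) hg w) x) := by
  have happ : ∀ (u : SchwartzMap R2 ℂ) (x : R2),
      (c • LineDeriv.lineDerivOpCLM ℝ (SchwartzMap R2 ℂ) m u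
        + SchwartzMap.bilinLeftCLM (ContinuousLinearMap.mul ℝ ℂ) hg u) x
      = c * fderiv ℝ (⇑u) x m + u x * g x := by
    intro u x
    simp [SchwartzMap.lineDerivOp_apply_eq_fderiv, LineDeriv.lineDerivOpCLM_apply, smul_eq_mul]
  have hsplitL : (∫ x, (c • LineDeriv.lineDerivOpCLM ℝ (SchwartzMap R2 ℂ) m v
        + SchwartzMap.bilinLeftCLM (ContinuousLinearMap.mul ℝ ℂ) hg v) x * (starRingEnd ℂ) (w x))
      = (∫ x, (c • LineDeriv.lineDerivOpCLM ℝ (SchwartzMap R2 ℂ) m v) x * (starRingEnd ℂ) (w x))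
        + ∫ x, (SchwartzMap.bilinLeftCLM (ContinuousLinearMap.mul ℝ ℂ) hg v) x
            * (starRingEnd ℂ) (w x) := by
    rw [← integral_add (intgr _ w) (intgr _ w)]
    refine integral_congr_ae (Filter.Eventually.of_forall fun x => ?_)
    simp [add_mul]
  have hsplitR : (∫ x, v x * (starRingEnd ℂ) ((c • LineDeriv.lineDerivOpCLM ℝ (SchwartzMap R2 ℂ) m w
        + SchwartzMap.bilinLeftCLM (ContinuousLinearMap.mul ℝ ℂ) hg w) x))
      = (∫ x, v x * (starRingEnd ℂ) ((c • LineDeriv.lineDerivOpCLM ℝ (SchwartzMap R2 ℂ) m w) x))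
        + ∫ x, v x * (starRingEnd ℂ)
            ((SchwartzMap.bilinLeftCLM (ContinuousLinearMap.mul ℝ ℂ) hg w) x) := by
    rw [← integral_add (intgr v _) (intgr v _)]
    refine integral_congr_ae (Filter.Eventually.of_forall fun x => ?_)
    simp [map_add, mul_add]
  rw [hsplitL, hsplitR]
  congr 1
  · -- derivative terms
    have l1 : (∫ x, (c • LineDeriv.lineDerivOpCLM ℝ (SchwartzMap R2 ℂ) m v) x * (starRingEnd ℂ) (w x))
        = c * ∫ x, fderiv ℝ (⇑v) x m * (starRingEnd ℂ) (w x) := by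
      rw [← integral_const_mul]
      refine integral_congr_ae (Filter.Eventually.of_forall fun x => ?_)
      simp [SchwartzMap.smul_apply, SchwartzMap.lineDerivOp_apply_eq_fderiv, LineDeriv.lineDerivOpCLM_apply, smul_eq_mul, mul_assoc]
    have l2 : (∫ x, v x * (starRingEnd ℂ) ((c • LineDeriv.lineDerivOpCLM ℝ (SchwartzMap R2 ℂ) m w) x))
        = (starRingEnd ℂ) c * ∫ x, v x * (starRingEnd ℂ) (fderiv ℝ (⇑w) x m) := by
      rw [← integral_const_mul]
      refine integral_congr_ae (Filter.Eventually.of_forall fun x => ?_)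
      simp [SchwartzMap.smul_apply, SchwartzMap.lineDerivOp_apply_eq_fderiv, LineDeriv.lineDerivOpCLM_apply, smul_eq_mul, map_mul]
      ring
    rw [l1, l2, ibp v w m, hc]
    ring
  · -- multiplication terms
    refine integral_congr_ae (Filter.Eventually.of_forall fun x => ?_)
    have h1 : (SchwartzMap.bilinLeftCLM (ContinuousLinearMap.mul ℝ ℂ) hg v) x = v x * g x := rfl
    have h2 : (SchwartzMap.bilinLeftCLM (ContinuousLinearMap.mul ℝ ℂ) hg w) x = w x * g x := rfl
    simp only [h1, h2, map_mul, hgr x]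
    ring

lemma integrable_sq_norm (f : SchwartzMap R2 ℂ) :
    Integrable (fun x => ‖f x‖ ^ 2) volume := by
  refine (intgr f f).norm.congr ?_
  filter_upwards with x
  rw [norm_mul, RCLike.norm_conj, ← sq]

lemma int_mul_conj_self (f : SchwartzMap R2 ℂ) :
    ∫ x, f x * (starRingEnd ℂ) (f x) = ((∫ x, ‖f x‖ ^ 2 : ℝ) : ℂ) := by
  have h1 : ∫ x : R2, ((‖f x‖ ^ 2 : ℝ) : ℂ) = ((∫ x : R2, ‖f x‖ ^ 2 : ℝ) : ℂ) :=
    integral_ofReal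
  rw [← h1]
  refine integral_congr_ae (Filter.Eventually.of_forall fun x => ?_)
  simp only [Complex.mul_conj, Complex.normSq_eq_norm_sq]

lemma eLp_eq_sqrt (f : SchwartzMap R2 ℂ) :
    eLpNorm (⇑f) 2 volume = ENNReal.ofReal (Real.sqrt (∫ x, ‖f x‖ ^ 2)) := by
  have hmem : MemLp (⇑f) 2 volume :=
    (memLp_two_iff_integrable_sq_norm f.continuous.aestronglyMeasurable).2 (integrable_sq_norm f)
  rw [hmem.eLpNorm_eq_integral_rpow_norm (by norm_num) (by norm_num)]
  congr 1
  have h2 : (2 : ENNReal).toReal = (2 : ℝ) := by norm_num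
  rw [h2]
  rw [Real.sqrt_eq_rpow]
  congr 1
  · refine integral_congr_ae (Filter.Eventually.of_forall fun x => ?_)
    show ‖f x‖ ^ (2:ℝ) = ‖f x‖ ^ (2:ℕ)
    rw [← Real.rpow_natCast]
    norm_num
  · norm_num

section scaled

variable (φ : R2 → ℝ) (hφ_smooth : ContDiff ℝ (⊤ : ℕ∞) φ)
  (hφ_bd : ∀ n : ℕ, 2 ≤ n → ∃ C : ℝ, ∀ x : R2, ‖iteratedFDeriv ℝ n φ x‖ ≤ C)
  {h : ℝ} (hpos : 0 < h)

/-- the scaling map as a CLM -/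
def Ls (h : ℝ) : R2 →L[ℝ] R2 := (h ^ (-(1/2 : ℝ)) : ℝ) • ContinuousLinearMap.id ℝ R2

lemma phih_eq : phih φ h = φ ∘ (Ls h) := rfl

include hφ_smooth in
lemma psi_smooth : ContDiff ℝ (⊤ : ℕ∞) (phih φ h) := by
  rw [phih_eq]
  exact hφ_smooth.comp (Ls h).contDiff

include hφ_smooth hφ_bd in
lemma psi_bd : ∀ n : ℕ, 2 ≤ n → ∃ C : ℝ, ∀ x : R2, ‖iteratedFDeriv ℝ n (phih φ h) x‖ ≤ C := by
  intro n hn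
  obtain ⟨C, hC⟩ := hφ_bd n hn
  have hC0 : 0 ≤ C := (norm_nonneg _).trans (hC 0)
  refine ⟨C * ‖Ls h‖ ^ n, fun x => ?_⟩
  have e1 : iteratedFDeriv ℝ n (phih φ h) x
      = (iteratedFDeriv ℝ n φ ((Ls h) x)).compContinuousLinearMap fun _ => (Ls h) := by
    rw [phih_eq]
    exact (Ls h).iteratedFDeriv_comp_right hφ_smooth x (mod_cast le_top)
  rw [e1]
  calc ‖(iteratedFDeriv ℝ n φ ((Ls h) x)).compContinuousLinearMap fun _ => (Ls h)‖
      ≤ ‖iteratedFDeriv ℝ n φ ((Ls h) x)‖ * ∏ _i : Fin n, ‖Ls h‖ :=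
        ContinuousMultilinearMap.norm_compContinuousLinearMap_le _ _
    _ ≤ C * ‖Ls h‖ ^ n := by
        rw [Finset.prod_const]
        simp only [Finset.card_univ, Fintype.card_fin]
        exact mul_le_mul_of_nonneg_right (hC _) (by positivity)

include hφ_smooth hφ_bd in
lemma htg_mult (a : ℝ) (j : Fin 2) :
    Function.HasTemperateGrowth (fun x => ((a * pdR j (phih φ h) x : ℝ) : ℂ)) := by
  have hfd : Function.HasTemperateGrowth (fderiv ℝ (phih φ h)) :=
    htg_fderiv_of_bd (psi_smooth φ hφ_smooth) (psi_bd φ hφ_smooth hφ_bd)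
  have := htg_clm_comp hfd
    ((a • Complex.ofRealCLM).comp
      (ContinuousLinearMap.apply ℝ ℝ (EuclideanSpace.single j 1)))
  convert this using 2 with x
  simp only [pdR, ContinuousLinearMap.comp_apply, ContinuousLinearMap.apply_apply,
    ContinuousLinearMap.smul_apply, Complex.ofRealCLM_apply, Complex.real_smul]
  push_cast
  ring

end scaled

lemma pd_comp_smul (f : R2 → ℝ) (hf : Differentiable ℝ f) (s : ℝ) (j : Fin 2) (x : R2) :
    pdR j (fun y => f (s • y)) x = s * pdR j f (s • x) := by
  have hF : HasFDerivAt (fun y : R2 => f (s • y))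
      ((fderiv ℝ f (s • x)).comp (s • ContinuousLinearMap.id ℝ R2)) x :=
    (hf (s • x)).hasFDerivAt.comp x (s • ContinuousLinearMap.id ℝ R2).hasFDerivAt
  unfold pdR
  rw [hF.fderiv, ContinuousLinearMap.comp_apply, ContinuousLinearMap.smul_apply,
    ContinuousLinearMap.id_apply, (fderiv ℝ f (s • x)).map_smul, smul_eq_mul]

lemma pd_const_mul (G : R2 → ℝ) (x : R2) (hG : DifferentiableAt ℝ G x) (c : ℝ) (j : Fin 2) :
    pdR j (fun y => c * G y) x = c * pdR j G x := by
  unfold pdR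
  rw [fderiv_const_mul hG]
  simp

section lap

variable (φ : R2 → ℝ) (hφ_smooth : ContDiff ℝ (⊤ : ℕ∞) φ)

include hφ_smooth in
lemma pd_differentiable (j : Fin 2) : Differentiable ℝ (pdR j φ) := by
  have h1 : pdR j φ = fun y =>
      (ContinuousLinearMap.apply ℝ ℝ (EuclideanSpace.single j 1)) (fderiv ℝ φ y) := rfl
  rw [h1]
  exact (ContinuousLinearMap.apply ℝ ℝ (EuclideanSpace.single j 1)).differentiable.comp
    ((hφ_smooth.fderiv_right (m := 1) ((WithTop.coe_le_coe.mpr le_top))).differentiable one_ne_zero)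

include hφ_smooth in
lemma lap_phih {h : ℝ} (hpos : 0 < h) (x : R2) :
    h ^ 2 / 4 * lapR (phih φ h) x
      = h / 4 * lapR φ ((h ^ (-(1/2 : ℝ)) : ℝ) • x) := by
  set s : ℝ := (h ^ (-(1/2 : ℝ)) : ℝ) with hs
  have hs2 : s * s = h⁻¹ := by
    rw [hs, ← Real.rpow_add hpos]
    norm_num
    exact Real.rpow_neg_one h
  have hpd1 : ∀ j : Fin 2, pdR j (phih φ h) = fun y => s * pdR j φ (s • y) := by
    intro j
    funext y
    exact pd_comp_smul φ (hφ_smooth.differentiable (by simp)) s j y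
  have hpd2 : ∀ j : Fin 2, pdR j (pdR j (phih φ h)) x = s * (s * pdR j (pdR j φ) (s • x)) := by
    intro j
    rw [hpd1 j]
    have hdiff : DifferentiableAt ℝ (fun y : R2 => pdR j φ (s • y)) x := by
      have heq : (fun y : R2 => pdR j φ (s • y))
          = (pdR j φ) ∘ (s • ContinuousLinearMap.id ℝ R2) := rfl
      rw [heq]
      exact ((pd_differentiable φ hφ_smooth j) _).comp x
        (s • ContinuousLinearMap.id ℝ R2).differentiableAt
    rw [pd_const_mul _ x hdiff s j,
      pd_comp_smul (pdR j φ) (pd_differentiable φ hφ_smooth j) s j x]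
  have hlap : lapR (phih φ h) x = s * s * lapR φ (s • x) := by
    unfold lapR
    rw [hpd2 0, hpd2 1]
    ring
  rw [hlap, hs2]
  field_simp

include hφ_smooth in
lemma abs_pd2_le (hφ_bd : ∀ n : ℕ, 2 ≤ n → ∃ C : ℝ, ∀ x : R2, ‖iteratedFDeriv ℝ n φ x‖ ≤ C) :
    ∃ C : ℝ, ∀ (j : Fin 2) (x : R2), |pdR j (pdR j φ) x| ≤ C := by
  obtain ⟨C, hC⟩ := hφ_bd 2 le_rfl
  refine ⟨C, fun j x => ?_⟩
  have h1 : pdR j φ = fun y =>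
      (ContinuousLinearMap.apply ℝ ℝ (EuclideanSpace.single j 1)) (fderiv ℝ φ y) := rfl
  have hfd : DifferentiableAt ℝ (fderiv ℝ φ) x :=
    ((hφ_smooth.fderiv_right (m := 1) ((WithTop.coe_le_coe.mpr le_top))).differentiable one_ne_zero) x
  have h2 : pdR j (pdR j φ) x
      = (fderiv ℝ (fderiv ℝ φ) x (EuclideanSpace.single j 1)) (EuclideanSpace.single j 1) := by
    have hF0 := ((ContinuousLinearMap.apply ℝ ℝ
        (EuclideanSpace.single j (1:ℝ))).hasFDerivAt (x := fderiv ℝ φ x)).comp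
        x hfd.hasFDerivAt
    have hF : HasFDerivAt (pdR j φ)
        ((ContinuousLinearMap.apply ℝ ℝ (EuclideanSpace.single j 1)).comp
          (fderiv ℝ (fderiv ℝ φ) x)) x := hF0
    show fderiv ℝ (pdR j φ) x (EuclideanSpace.single j 1) = _
    rw [hF.fderiv]
    rfl
  have h3 : pdR j (pdR j φ) x
      = iteratedFDeriv ℝ 2 φ x ![EuclideanSpace.single j 1, EuclideanSpace.single j 1] := by
    rw [iteratedFDeriv_two_apply, h2]
    simp
  rw [h3]
  calc |iteratedFDeriv ℝ 2 φ x ![EuclideanSpace.single j 1, EuclideanSpace.single j 1]|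
      = ‖iteratedFDeriv ℝ 2 φ x ![EuclideanSpace.single j 1, EuclideanSpace.single j 1]‖ := rfl
    _ ≤ ‖iteratedFDeriv ℝ 2 φ x‖ * ∏ i : Fin 2,
          ‖(![EuclideanSpace.single j 1, EuclideanSpace.single j 1] : Fin 2 → R2) i‖ :=
        (iteratedFDeriv ℝ 2 φ x).le_opNorm _
    _ ≤ C := by
        have : ∏ i : Fin 2, ‖(![EuclideanSpace.single j (1:ℝ),
            EuclideanSpace.single j 1] : Fin 2 → R2) i‖ = 1 := by
          simp [Fin.prod_univ_two, EuclideanSpace.norm_single]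
        rw [this, mul_one]
        exact hC x

end lap

def cc (h : ℝ) : ℂ := ((h/2 : ℝ) : ℂ) * (-Complex.I)

def opS (m : R2) {g : R2 → ℂ} (hg : g.HasTemperateGrowth) (c : ℂ)
    (v : SchwartzMap R2 ℂ) : SchwartzMap R2 ℂ :=
  c • LineDeriv.lineDerivOpCLM ℝ (SchwartzMap R2 ℂ) m v + SchwartzMap.bilinLeftCLM (ContinuousLinearMap.mul ℝ ℂ) hg v

lemma opS_apply (m : R2) {g : R2 → ℂ} (hg : g.HasTemperateGrowth) (c : ℂ)
    (v : SchwartzMap R2 ℂ) (x : R2) :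
    opS m hg c v x = c * fderiv ℝ (⇑v) x m + v x * g x := by
  simp only [opS, SchwartzMap.add_apply, SchwartzMap.smul_apply, SchwartzMap.lineDerivOp_apply_eq_fderiv, LineDeriv.lineDerivOpCLM_apply,
    smul_eq_mul]
  rfl

lemma selfadj (c : ℂ) (hc : (starRingEnd ℂ) c = -c) (m : R2) {g : R2 → ℂ}
    (hg : g.HasTemperateGrowth) (hgr : ∀ x, (starRingEnd ℂ) (g x) = g x)
    (v w : SchwartzMap R2 ℂ) :
    ∫ x, (opS m hg c v) x * (starRingEnd ℂ) (w x)
      = ∫ x, v x * (starRingEnd ℂ) ((opS m hg c w) x) :=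
  selfadj_aux c hc m hg hgr v w

lemma pd_smooth (f : R2 → ℝ) (hf : ContDiff ℝ (⊤ : ℕ∞) f) (j : Fin 2) :
    ContDiff ℝ (⊤ : ℕ∞) (pdR j f) := by
  have h1 : pdR j f = fun y =>
      (ContinuousLinearMap.apply ℝ ℝ (EuclideanSpace.single j 1)) (fderiv ℝ f y) := rfl
  rw [h1]
  exact (ContinuousLinearMap.apply ℝ ℝ (EuclideanSpace.single j 1)).contDiff.comp
    (hf.fderiv_right (m := ((⊤ : ℕ∞) : WithTop ℕ∞)) (by exact_mod_cast le_top))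

set_option maxHeartbeats 1600000 in
/-- For solutions of `P u = 0`, the `L²` norms of `Au` and `Bu` are controlled by
`((h/4)‖Δφ‖_∞ + 1)^{1/2} ‖u‖_{L²}`. -/
theorem stmt5 (φ : R2 → ℝ) (hφ_smooth : ContDiff ℝ (⊤ : ℕ∞) φ)
    (hφ_bd : ∀ n : ℕ, 2 ≤ n → ∃ C : ℝ, ∀ x : R2, ‖iteratedFDeriv ℝ n φ x‖ ≤ C) :
    ∀ h ∈ Set.Ioc (0 : ℝ) 1, ∀ u : SchwartzMap R2 ℂ,
      (∀ x : R2, opPh φ h (⇑u) x = 0) →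
      eLpNorm (opAh φ h (⇑u)) 2 volume ≤
          ENNReal.ofReal (Real.sqrt (h / 4 * (⨆ x : R2, |lapR φ x|) + 1)) *
            eLpNorm (⇑u) 2 volume ∧
      eLpNorm (opBh φ h (⇑u)) 2 volume ≤
          ENNReal.ofReal (Real.sqrt (h / 4 * (⨆ x : R2, |lapR φ x|) + 1)) *
            eLpNorm (⇑u) 2 volume := by
  intro h hh u hPu
  obtain ⟨hpos, -⟩ := hh
  classical
  -- multipliers
  have htgA : Function.HasTemperateGrowth
      (fun x => ((-(h/2) * pdR 1 (phih φ h) x : ℝ) : ℂ)) :=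
    htg_mult φ hφ_smooth hφ_bd (-(h/2)) 1
  have htgB : Function.HasTemperateGrowth
      (fun x => ((h/2 * pdR 0 (phih φ h) x : ℝ) : ℂ)) :=
    htg_mult φ hφ_smooth hφ_bd (h/2) 0
  have hgrA : ∀ x : R2, (starRingEnd ℂ) (((-(h/2) * pdR 1 (phih φ h) x : ℝ) : ℂ))
      = ((-(h/2) * pdR 1 (phih φ h) x : ℝ) : ℂ) := fun x => Complex.conj_ofReal _
  have hgrB : ∀ x : R2, (starRingEnd ℂ) (((h/2 * pdR 0 (phih φ h) x : ℝ) : ℂ))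
      = ((h/2 * pdR 0 (phih φ h) x : ℝ) : ℂ) := fun x => Complex.conj_ofReal _
  have hc : (starRingEnd ℂ) (cc h) = -(cc h) := by
    unfold cc
    rw [map_mul, Complex.conj_ofReal, map_neg, Complex.conj_I]
    ring
  set AS : SchwartzMap R2 ℂ → SchwartzMap R2 ℂ :=
    opS (EuclideanSpace.single 0 1) htgA (cc h) with hAS
  set BS : SchwartzMap R2 ℂ → SchwartzMap R2 ℂ :=
    opS (EuclideanSpace.single 1 1) htgB (cc h) with hBS
  have AS_coe : ∀ (v : SchwartzMap R2 ℂ) (x : R2), (AS v) x = opAh φ h (⇑v) x := by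
    intro v x
    rw [hAS, opS_apply]
    unfold cc opAh Dop pdC
    push_cast
    ring
  have BS_coe : ∀ (v : SchwartzMap R2 ℂ) (x : R2), (BS v) x = opBh φ h (⇑v) x := by
    intro v x
    rw [hBS, opS_apply]
    unfold cc opBh Dop pdC
    push_cast
    ring
  have AS2 : ∀ x, (AS (AS u)) x = opAh φ h (opAh φ h (⇑u)) x := by
    intro x
    rw [AS_coe (AS u) x, show ⇑(AS u) = opAh φ h ⇑u from funext (AS_coe u)]
  have BS2 : ∀ x, (BS (BS u)) x = opBh φ h (opBh φ h (⇑u)) x := by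
    intro x
    rw [BS_coe (BS u) x, show ⇑(BS u) = opBh φ h ⇑u from funext (BS_coe u)]
  -- pointwise identity from P u = 0
  have hpoint : ∀ x, (AS (AS u)) x + (BS (BS u)) x
      = ((h^2/4 * lapR (phih φ h) x + 1 : ℝ) : ℂ) * u x := by
    intro x
    have h0 := hPu x
    unfold opPh at h0
    rw [AS2 x, BS2 x]
    push_cast at h0 ⊢
    linear_combination h0
  -- the sup bound
  set S : ℝ := ⨆ x : R2, |lapR φ x| with hS
  obtain ⟨C2, hC2⟩ := abs_pd2_le φ hφ_smooth hφ_bd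
  have hbdd : BddAbove (Set.range fun x : R2 => |lapR φ x|) := by
    refine ⟨C2 + C2, ?_⟩
    rintro y ⟨x, rfl⟩
    unfold lapR
    exact (abs_add_le _ _).trans (add_le_add (hC2 0 x) (hC2 1 x))
  have hsup : ∀ y : R2, |lapR φ y| ≤ S := fun y => le_ciSup hbdd y
  have hS0 : 0 ≤ S := (abs_nonneg _).trans (hsup 0)
  set M : ℝ := h/4 * S + 1 with hM
  have hM0 : 0 ≤ M := by
    rw [hM]
    nlinarith [hpos, hS0]
  have hrle : ∀ x : R2, |h^2/4 * lapR (phih φ h) x + 1| ≤ M := by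
    intro x
    rw [lap_phih φ hφ_smooth hpos x]
    have h1 : |h/4 * lapR φ ((h ^ (-(1/2 : ℝ)) : ℝ) • x)| ≤ h/4 * S := by
      rw [abs_mul, _root_.abs_of_nonneg (by positivity : (0:ℝ) ≤ h/4)]
      exact mul_le_mul_of_nonneg_left (hsup _) (by positivity)
    calc |h/4 * lapR φ ((h ^ (-(1/2 : ℝ)) : ℝ) • x) + 1|
        ≤ |h/4 * lapR φ ((h ^ (-(1/2 : ℝ)) : ℝ) • x)| + 1 := by
          exact (abs_add_le _ _).trans (by norm_num)
      _ ≤ M := by rw [hM]; linarith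
  -- integrability facts
  have hIA : Integrable (fun x => ‖(AS u) x‖^2) volume := integrable_sq_norm (AS u)
  have hIB : Integrable (fun x => ‖(BS u) x‖^2) volume := integrable_sq_norm (BS u)
  have hIu : Integrable (fun x => ‖u x‖^2) volume := integrable_sq_norm u
  have hrcont : Continuous (fun x : R2 => h^2/4 * lapR (phih φ h) x + 1) := by
    have hψ : ContDiff ℝ (⊤ : ℕ∞) (phih φ h) := psi_smooth φ hφ_smooth
    have hcl : Continuous (lapR (phih φ h)) := by
      unfold lapR
      exact ((pd_smooth _ (pd_smooth _ hψ 0) 0).continuous.add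
        (pd_smooth _ (pd_smooth _ hψ 1) 1).continuous)
    continuity
  have hru : Integrable
      (fun x => (h^2/4 * lapR (phih φ h) x + 1) * ‖u x‖^2) volume := by
    refine hIu.bdd_mul hrcont.aestronglyMeasurable (c := M) (Filter.Eventually.of_forall fun x => ?_)
    simpa using hrle x
  -- the key complex integral identity
  have e1 : ∫ x, (AS (AS u)) x * (starRingEnd ℂ) (u x)
      = ∫ x, (AS u) x * (starRingEnd ℂ) ((AS u) x) := by
    rw [hAS]
    exact selfadj (cc h) hc _ htgA hgrA (AS u) u
  have e2 : ∫ x, (BS (BS u)) x * (starRingEnd ℂ) (u x)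
      = ∫ x, (BS u) x * (starRingEnd ℂ) ((BS u) x) := by
    rw [hBS]
    exact selfadj (cc h) hc _ htgB hgrB (BS u) u
  have esum : (∫ x, (AS u) x * (starRingEnd ℂ) ((AS u) x))
      + (∫ x, (BS u) x * (starRingEnd ℂ) ((BS u) x))
      = ∫ x, ((h^2/4 * lapR (phih φ h) x + 1 : ℝ) : ℂ) * (u x * (starRingEnd ℂ) (u x)) := by
    rw [← e1, ← e2, ← integral_add (intgr (AS (AS u)) u) (intgr (BS (BS u)) u)]
    refine integral_congr_ae (Filter.Eventually.of_forall fun x => ?_)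
    have := hpoint x
    simp only []
    rw [← add_mul, this]
    ring
  -- convert to real integrals
  have hAr : ∫ x, (AS u) x * (starRingEnd ℂ) ((AS u) x)
      = ((∫ x, ‖(AS u) x‖^2 : ℝ) : ℂ) := int_mul_conj_self (AS u)
  have hBr : ∫ x, (BS u) x * (starRingEnd ℂ) ((BS u) x)
      = ((∫ x, ‖(BS u) x‖^2 : ℝ) : ℂ) := int_mul_conj_self (BS u)
  have hRr : ∫ x, ((h^2/4 * lapR (phih φ h) x + 1 : ℝ) : ℂ) * (u x * (starRingEnd ℂ) (u x))
      = ((∫ x, (h^2/4 * lapR (phih φ h) x + 1) * ‖u x‖^2 : ℝ) : ℂ) := by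
    have hco : ∫ x : R2, (((h^2/4 * lapR (phih φ h) x + 1) * ‖u x‖^2 : ℝ) : ℂ)
        = ((∫ x, (h^2/4 * lapR (phih φ h) x + 1) * ‖u x‖^2 : ℝ) : ℂ) := integral_ofReal
    rw [← hco]
    refine integral_congr_ae (Filter.Eventually.of_forall fun x => ?_)
    simp only [Complex.mul_conj, Complex.normSq_eq_norm_sq]
    push_cast
    ring_nf
  have hreal : (∫ x, ‖(AS u) x‖^2) + (∫ x, ‖(BS u) x‖^2)
      = ∫ x, (h^2/4 * lapR (phih φ h) x + 1) * ‖u x‖^2 := by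
    have := esum
    rw [hAr, hBr, hRr] at this
    exact_mod_cast this
  have hBnn : 0 ≤ ∫ x, ‖(BS u) x‖^2 := integral_nonneg fun x => sq_nonneg _
  have hAnn : 0 ≤ ∫ x, ‖(AS u) x‖^2 := integral_nonneg fun x => sq_nonneg _
  have hmono : ∫ x, (h^2/4 * lapR (phih φ h) x + 1) * ‖u x‖^2 ≤ M * ∫ x, ‖u x‖^2 := by
    rw [← integral_const_mul]
    refine integral_mono hru (hIu.const_mul M) fun x => ?_
    exact mul_le_mul_of_nonneg_right ((le_abs_self _).trans (hrle x)) (sq_nonneg _)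
  have hAle : ∫ x, ‖(AS u) x‖^2 ≤ M * ∫ x, ‖u x‖^2 :=
    (le_add_of_nonneg_right hBnn).trans (hreal.le.trans hmono)
  have hBle : ∫ x, ‖(BS u) x‖^2 ≤ M * ∫ x, ‖u x‖^2 :=
    (le_add_of_nonneg_left hAnn).trans (hreal.le.trans hmono)
  have final : ∀ f : SchwartzMap R2 ℂ, (∫ x, ‖f x‖^2) ≤ M * ∫ x, ‖u x‖^2 →
      eLpNorm (⇑f) 2 volume ≤ ENNReal.ofReal (Real.sqrt M) * eLpNorm (⇑u) 2 volume := by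
    intro f hf
    rw [eLp_eq_sqrt f, eLp_eq_sqrt u, ← ENNReal.ofReal_mul (Real.sqrt_nonneg M)]
    apply ENNReal.ofReal_le_ofReal
    rw [← Real.sqrt_mul hM0]
    exact Real.sqrt_le_sqrt hf
  constructor
  · rw [show opAh φ h ⇑u = ⇑(AS u) from (funext (AS_coe u)).symm]
    exact final (AS u) hAle
  · rw [show opBh φ h ⇑u = ⇑(BS u) from (funext (BS_coe u)).symm]
    exact final (BS u) hBle
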